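/- For fixed α with 0 ≤ α < 1, as N → ∞: c₁ := (2 sin(θ₁/2) / (α₁² sin²θ₁ √N)) · (cos θ₁ + 1/(N + N^α − 1)) satisfies c₁ = (1/√2)·N^{(1−α)/2} + o(N^{(1−α)/2}), where cos θ₁ = ((N−2) + √(N² − 4N^α + 4N^{2α}/(N + N^α − 1)))/(2(N−1)), θ₁ = arccos(cos θ₁), and α₁² = cos²θ₁ + 1/(N + N^α − 1). -/

import Mathlib

open Filter Real Asymptotics

noncomputable def cosTheta1 (α N : ℝ) : ℝ :=
  ((N - 2) + Real.sqrt (N ^ 2 - 4 * N ^ α + 4 * N ^ (2 * α) / (N + N ^ α - 1)))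
    / (2 * (N - 1))

noncomputable def theta1 (α N : ℝ) : ℝ := Real.arccos (cosTheta1 α N)

noncomputable def alpha1Sq (α N : ℝ) : ℝ := (cosTheta1 α N) ^ 2 + 1 / (N + N ^ α - 1)

noncomputable def c1 (α N : ℝ) : ℝ :=
  2 * Real.sin (theta1 α N / 2) / (alpha1Sq α N * (Real.sin (theta1 α N)) ^ 2 * Real.sqrt N)
    * (cosTheta1 α N + 1 / (N + N ^ α - 1))


open Topology

/-!
The exact identity `1 - cos θ₁ = 2 N^α / (S (N + √D))`, with `S = N + N^α - 1` and `D` the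
discriminant under the square root, shows `(1 - cos θ₁) N^(2-α) → 1`. Since
`sin (θ₁/2) = √((1 - cos θ₁)/2)` and `sin² θ₁ = (1 - cos θ₁)(1 + cos θ₁)`, this gives
`c₁ / N^((1-α)/2) = √2 (c + 1/S) / ((c² + 1/S)(1 + c) √((1 - c) N^(2-α))) → √2 / 2`,
where `c = cos θ₁ → 1` and `1/S → 0`.
-/

lemma two_mul_sin_half_arccos_div_sin_arccos_sq {c : ℝ} (h₁ : -1 < c) (h₂ : c < 1) :
    2 * sin (arccos c / 2) / sin (arccos c) ^ 2 = √2 / ((1 + c) * √(1 - c)) := by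
  have hq : 0 < √(1 - c) := sqrt_pos.2 (by linarith)
  have h1c : 0 < 1 + c := by linarith
  have hsin_half : sin (arccos c / 2) = √(1 - c) / √2 := by
    rw [sin_half_eq_sqrt (arccos_nonneg c) (by linarith [arccos_le_pi c, pi_pos]),
      cos_arccos h₁.le h₂.le, sqrt_div' _ zero_le_two]
  have hsin_sq : sin (arccos c) ^ 2 = (1 + c) * √(1 - c) ^ 2 := by
    rw [sin_arccos, sq_sqrt (by nlinarith), sq_sqrt (by linarith)]; ring
  rw [hsin_half, hsin_sq]
  field_simp
  rw [sq_sqrt zero_le_two]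

lemma tendsto_rpow_div_self_atTop {α : ℝ} (hα : α < 1) :
    Tendsto (fun N : ℝ => N ^ α / N) atTop (𝓝 0) := by
  refine (tendsto_rpow_neg_atTop (sub_pos.2 hα)).congr' ?_
  filter_upwards [eventually_gt_atTop 0] with N hN
  rw [neg_sub, rpow_sub_one hN.ne']

namespace CosTheta1

noncomputable def S (α N : ℝ) : ℝ := N + N ^ α - 1

noncomputable def D (α N : ℝ) : ℝ := N ^ 2 - 4 * N ^ α + 4 * N ^ (2 * α) / S α N

variable {α N : ℝ}

lemma S_pos (hN : 1 < N) : 0 < S α N := by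
  have := rpow_pos_of_pos (zero_lt_one.trans hN) α
  rw [S]; linarith

lemma D_eq (hN : 1 < N) : D α N = (N ^ 2 * (N - 1) + N ^ α * (N - 2) ^ 2) / S α N := by
  have hS : S α N ≠ 0 := (S_pos hN).ne'
  rw [eq_div_iff hS, D, add_mul, div_mul_cancel₀ _ hS, mul_comm 2 α, rpow_mul (by linarith),
    rpow_two, S]
  ring

lemma D_pos (hN : 1 < N) : 0 < D α N := by
  have := rpow_pos_of_pos (zero_lt_one.trans hN) α
  rw [D_eq hN]
  exact div_pos (add_pos_of_pos_of_nonneg (mul_pos (by positivity) (sub_pos.2 hN)) (by positivity))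
    (S_pos hN)

lemma tendsto_S_div_self (hα : α < 1) : Tendsto (fun N => S α N / N) atTop (𝓝 1) := by
  have h : Tendsto (fun N : ℝ => 1 + N ^ α / N - N⁻¹) atTop (𝓝 (1 + 0 - 0)) :=
    (tendsto_const_nhds.add (tendsto_rpow_div_self_atTop hα)).sub tendsto_inv_atTop_zero
  rw [add_zero, sub_zero] at h
  refine h.congr' ?_
  filter_upwards [eventually_ne_atTop 0] with N hN
  rw [S]; field_simp

lemma tendsto_S_atTop : Tendsto (S α) atTop atTop := by
  refine tendsto_atTop_mono' atTop ?_ (tendsto_atTop_add_const_right _ (-1) tendsto_id)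
  filter_upwards [eventually_ge_atTop 0] with N hN
  have := rpow_nonneg hN α
  rw [S, id]; linarith

lemma tendsto_D_div_sq (hα : α < 1) : Tendsto (fun N => D α N / N ^ 2) atTop (𝓝 1) := by
  have hx := tendsto_inv_atTop_zero (𝕜 := ℝ)
  have h : Tendsto (fun N : ℝ => (1 - N⁻¹ + N ^ α / N * (1 - 2 * N⁻¹) ^ 2) / (S α N / N)) atTop
      (𝓝 ((1 - 0 + 0 * (1 - 2 * 0) ^ 2) / 1)) :=
    ((tendsto_const_nhds.sub hx).add ((tendsto_rpow_div_self_atTop hα).mul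
      ((tendsto_const_nhds.sub (tendsto_const_nhds.mul hx)).pow 2))).div
      (tendsto_S_div_self hα) one_ne_zero
  rw [show ((1 : ℝ) - 0 + 0 * (1 - 2 * 0) ^ 2) / 1 = 1 by norm_num] at h
  refine h.congr' ?_
  filter_upwards [eventually_gt_atTop 1] with N hN
  have := S_pos (α := α) hN
  rw [D_eq hN]
  field_simp

lemma tendsto_sqrt_D_div_self (hα : α < 1) : Tendsto (fun N => √(D α N) / N) atTop (𝓝 1) := by
  have h := (tendsto_D_div_sq hα).sqrt
  rw [sqrt_one] at h
  refine h.congr' ?_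
  filter_upwards [eventually_ge_atTop 0] with N hN
  rw [sqrt_div' _ (sq_nonneg N), sqrt_sq hN]

end CosTheta1

open CosTheta1

section
variable {α N : ℝ}

lemma cosTheta1_eq : cosTheta1 α N = (N - 2 + √(D α N)) / (2 * (N - 1)) := rfl

lemma one_sub_cosTheta1 (hN : 1 < N) :
    1 - cosTheta1 α N = 2 * N ^ α / (S α N * (N + √(D α N))) := by
  have hS := S_pos (α := α) hN
  have hD := D_eq (α := α) hN
  have hs := sq_sqrt (D_pos (α := α) hN).le
  have hN1 : 2 * (N - 1) ≠ 0 := by linarith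
  have hSdef : S α N = N + N ^ α - 1 := rfl
  rw [eq_div_iff hS.ne'] at hD
  rw [cosTheta1_eq, eq_div_iff (mul_pos hS (by positivity)).ne', one_sub_div hN1,
    div_mul_eq_mul_div, div_eq_iff hN1]
  linear_combination (-S α N) * hs - hD + N ^ 2 * hSdef

lemma cosTheta1_lt_one (hN : 1 < N) : cosTheta1 α N < 1 := by
  have hN0 : 0 < N := zero_lt_one.trans hN
  rw [← sub_pos, one_sub_cosTheta1 hN]
  exact div_pos (mul_pos two_pos (rpow_pos_of_pos hN0 α))
    (mul_pos (S_pos hN) (add_pos_of_pos_of_nonneg hN0 (sqrt_nonneg _)))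

lemma cosTheta1_nonneg (hN : 2 ≤ N) : 0 ≤ cosTheta1 α N :=
  div_nonneg (add_nonneg (by linarith) (sqrt_nonneg _)) (by linarith)

lemma c1_eq (hN : 2 ≤ N) :
    c1 α N = √2 * (cosTheta1 α N + 1 / S α N) /
      ((cosTheta1 α N ^ 2 + 1 / S α N) * (1 + cosTheta1 α N) * √(1 - cosTheta1 α N) * √N) := by
  have h := two_mul_sin_half_arccos_div_sin_arccos_sq
    (by linarith [cosTheta1_nonneg (α := α) hN]) (cosTheta1_lt_one (α := α) (by linarith))
  calc c1 α N = 2 * sin (theta1 α N / 2) / sin (theta1 α N) ^ 2 * (cosTheta1 α N + 1 / S α N) /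
        (alpha1Sq α N * √N) := by rw [c1, S]; ring
    _ = _ := by
      rw [theta1, h, alpha1Sq, S, div_mul_eq_mul_div, div_div]
      congr 1
      ring

lemma c1_div_rpow_eq (hN : 2 ≤ N) :
    c1 α N / N ^ ((1 - α) / 2) = √2 * (cosTheta1 α N + 1 / S α N) /
      ((cosTheta1 α N ^ 2 + 1 / S α N) * (1 + cosTheta1 α N) *
        √((1 - cosTheta1 α N) * N ^ (2 - α))) := by
  have hN0 : 0 < N := by linarith
  have hpow : √N * N ^ ((1 - α) / 2) = √(N ^ (2 - α)) := by
    rw [sqrt_eq_rpow, sqrt_eq_rpow, ← rpow_mul hN0.le, ← rpow_add hN0]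
    ring_nf
  rw [c1_eq hN, sqrt_mul (sub_nonneg.2 (cosTheta1_lt_one (by linarith)).le), ← hpow, div_div]
  ring

lemma tendsto_one_sub_cosTheta1_mul_rpow (hα : α < 1) :
    Tendsto (fun N => (1 - cosTheta1 α N) * N ^ (2 - α)) atTop (𝓝 1) := by
  have h : Tendsto (fun N => 2 / (S α N / N * (1 + √(D α N) / N))) atTop
      (𝓝 (2 / (1 * (1 + 1)))) :=
    tendsto_const_nhds.div ((tendsto_S_div_self hα).mul
      (tendsto_const_nhds.add (tendsto_sqrt_D_div_self hα))) (by norm_num)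
  rw [show (2 : ℝ) / (1 * (1 + 1)) = 1 by norm_num] at h
  refine h.congr' ?_
  filter_upwards [eventually_gt_atTop 1] with N hN
  have hpow : N ^ α * N ^ (2 - α) = N ^ 2 := by
    rw [← rpow_add (by linarith), add_sub_cancel, rpow_two]
  have := S_pos (α := α) hN
  have := sqrt_nonneg (D α N)
  rw [one_sub_cosTheta1 hN]
  field_simp
  rw [hpow]

lemma tendsto_cosTheta1 (hα : α < 1) : Tendsto (cosTheta1 α) atTop (𝓝 1) := by
  have h : Tendsto (fun N => 1 - (1 - cosTheta1 α N) * N ^ (2 - α) / N ^ (2 - α)) atTop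
      (𝓝 (1 - 0)) :=
    tendsto_const_nhds.sub <|
      (tendsto_one_sub_cosTheta1_mul_rpow hα).div_atTop (tendsto_rpow_atTop (by linarith))
  rw [sub_zero] at h
  refine h.congr' ?_
  filter_upwards [eventually_gt_atTop 0] with N hN
  rw [mul_div_cancel_right₀ _ (rpow_pos_of_pos hN _).ne', sub_sub_cancel]

lemma tendsto_c1_div_rpow (hα : α < 1) :
    Tendsto (fun N => c1 α N / N ^ ((1 - α) / 2)) atTop (𝓝 (1 / √2)) := by
  have hc := tendsto_cosTheta1 hα
  have hε : Tendsto (fun N => 1 / S α N) atTop (𝓝 0) :=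
    tendsto_S_atTop.inv_tendsto_atTop.congr fun N => (one_div _).symm
  have h : Tendsto (fun N => √2 * (cosTheta1 α N + 1 / S α N) /
      ((cosTheta1 α N ^ 2 + 1 / S α N) * (1 + cosTheta1 α N) *
        √((1 - cosTheta1 α N) * N ^ (2 - α)))) atTop
      (𝓝 (√2 * (1 + 0) / ((1 ^ 2 + 0) * (1 + 1) * √1))) :=
    (tendsto_const_nhds.mul (hc.add hε)).div
      ((((hc.pow 2).add hε).mul (tendsto_const_nhds.add hc)).mul
        (tendsto_one_sub_cosTheta1_mul_rpow hα).sqrt) (by norm_num)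
  have hlim : √2 * (1 + 0) / ((1 ^ 2 + 0) * (1 + 1) * √1) = 1 / √2 := by
    rw [sqrt_one, ← sqrt_div_self']
    ring
  rw [hlim] at h
  refine h.congr' ?_
  filter_upwards [eventually_ge_atTop 2] with N hN
  exact (c1_div_rpow_eq hN).symm

end

theorem c1_asymptotics_general (α : ℝ) (h1 : α < 1) :
    (fun N : ℝ => c1 α N - (1 / Real.sqrt 2) * N ^ ((1 - α) / 2))
      =o[atTop] fun N : ℝ => N ^ ((1 - α) / 2) := by
  have hg : ∀ᶠ N : ℝ in atTop, N ^ ((1 - α) / 2) ≠ 0 :=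
    (eventually_gt_atTop 0).mono fun N hN => (rpow_pos_of_pos hN _).ne'
  rw [isLittleO_iff_tendsto' (hg.mono fun N hN hN' => absurd hN' hN)]
  have h := (tendsto_c1_div_rpow h1).sub_const (1 / √2)
  rw [sub_self] at h
  refine h.congr' ?_
  filter_upwards [hg] with N hN
  field_simp

theorem c1_asymptotics (α : ℝ) (h0 : 0 ≤ α) (h1 : α < 1) :
    (fun N : ℝ => c1 α N - (1 / Real.sqrt 2) * N ^ ((1 - α) / 2))
      =o[atTop] fun N : ℝ => N ^ ((1 - α) / 2) :=
  c1_asymptotics_general α h1
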